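/- arXiv:2405.17290 — 2 statements merged into one kernel-verified Lean document; each statement's English description precedes it below -/
import Mathlib

section
/- Assume ∑_{g∈G} α_g ≥ 0, the cost c is strictly convex in the discrete sense, and let R ≥ 1 be an integer. Define the cutoffs γ(r) = Δc(r) + (∑_{g∈G} α_g)·(r − 1/2) for integers r ≥ 1, and set A = a + ∑_{g∈G} α_g·m_g. Then for any r ∈ {0,1,…,R}, the point r is the strict (hence unique) maximizer of U over {0,1,…,R} — that is, U(r) > U(r′) for every r′ ∈ {0,…,R} with r′ ≠ r — if and only if (r = 0 or A > γ(r)) and (r = R or A < γ(r+1)). -/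
open Finset

/-- With cutoffs `γ(r) = Δc(r) + (∑ g, α g)·(r − 1/2)` and `A = a + ∑ g, α g · m g`,
a point `r ∈ {0,…,R}` is the strict (hence unique) maximizer of the expected payoff `U`
over `{0,…,R}` if and only if `(r = 0 ∨ A > γ(r))` and `(r = R ∨ A < γ(r+1))`. -/
theorem strict_max_iff_cutoffs
    {G : Type*} [Fintype G] (α : G → ℝ) (c : ℕ → ℝ) (a : ℝ) (m s : G → ℝ)
    (U : ℕ → ℝ)
    (hU : ∀ y : ℕ, U y =
      a * y - c y - ∑ g, α g / 2 * ((y : ℝ) ^ 2 - 2 * y * m g + s g))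
    (hα : 0 ≤ ∑ g, α g)
    (hc : ∀ r : ℕ, 1 ≤ r → c (r + 1) - c r > c r - c (r - 1))
    (R : ℕ) (hR : 1 ≤ R)
    (γ : ℕ → ℝ)
    (hγ : ∀ r : ℕ, 1 ≤ r → γ r = (c r - c (r - 1)) + (∑ g, α g) * ((r : ℝ) - 1 / 2))
    (A : ℝ) (hA : A = a + ∑ g, α g * m g)
    (r : ℕ) (hr : r ≤ R) :
    (∀ r' : ℕ, r' ≤ R → r' ≠ r → U r' < U r) ↔
      ((r = 0 ∨ γ r < A) ∧ (r = R ∨ A < γ (r + 1))) := by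
  -- Key difference formula: U (y+1) - U y = A - γ (y+1)
  have key : ∀ y : ℕ, U (y + 1) - U y = A - γ (y + 1) := by
    intro y
    have h1 := hγ (y + 1) (by omega)
    simp only [Nat.add_sub_cancel] at h1
    rw [hU (y + 1), hU y, h1, hA]
    have hsum : ∑ g, α g / 2 * (((y : ℝ) + 1) ^ 2 - 2 * ((y : ℝ) + 1) * m g + s g)
        - ∑ g, α g / 2 * ((y : ℝ) ^ 2 - 2 * (y : ℝ) * m g + s g)
        = (∑ g, α g) * (((y : ℝ) + 1) - 1 / 2) - ∑ g, α g * m g := by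
      rw [← Finset.sum_sub_distrib, Finset.sum_mul, ← Finset.sum_sub_distrib]
      exact Finset.sum_congr rfl fun g _ => by ring
    push_cast
    push_cast at hsum
    linarith [hsum]
  -- γ is strictly increasing on r ≥ 1
  have hstep : ∀ t : ℕ, 1 ≤ t → γ t < γ (t + 1) := by
    intro t ht
    have hct := hc t ht
    rw [hγ t ht, hγ (t + 1) (by omega)]
    simp only [Nat.add_sub_cancel]
    push_cast
    nlinarith [hα]
  have hmono : ∀ p q : ℕ, 1 ≤ p → p ≤ q → γ p ≤ γ q := by
    intro p q hp hpq
    induction q with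
    | zero => omega
    | succ n ih =>
      rcases Nat.lt_succ_iff_lt_or_eq.mp (Nat.lt_succ_of_le hpq) with h | h
      · exact le_trans (ih (by omega)) (le_of_lt (hstep n (by omega)))
      · exact le_of_eq (by rw [h])
  constructor
  · intro h
    constructor
    · rcases Nat.eq_zero_or_pos r with h0 | h0
      · exact Or.inl h0
      · refine Or.inr ?_
        have h2 := h (r - 1) (by omega) (by omega)
        have h3 := key (r - 1)
        have h4 : r - 1 + 1 = r := by omega
        rw [h4] at h3
        linarith
    · rcases eq_or_ne r R with h0 | h0
      · exact Or.inl h0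
      · refine Or.inr ?_
        have h2 := h (r + 1) (by omega) (by omega)
        have h3 := key r
        linarith
  · rintro ⟨h1, h2⟩ r' hr' hne
    rcases Nat.lt_or_ge r' r with hlt | hge
    · -- r' < r : climb up
      have hr0 : γ r < A := by
        rcases h1 with h | h
        · omega
        · exact h
      have up : ∀ y : ℕ, y < r → U y < U (y + 1) := by
        intro y hy
        have h3 := key y
        have h4 : γ (y + 1) ≤ γ r := hmono (y + 1) r (by omega) (by omega)
        linarith
      have aux : ∀ q : ℕ, q ≤ r → ∀ p : ℕ, p < q → U p < U q := by
        intro q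
        induction q with
        | zero => omega
        | succ n ih =>
          intro hq p hp
          have hn : U n < U (n + 1) := up n (by omega)
          rcases Nat.lt_succ_iff_lt_or_eq.mp hp with h | h
          · exact lt_trans (ih (by omega) p h) hn
          · subst h; exact hn
      exact aux r le_rfl r' hlt
    · have hgt : r < r' := lt_of_le_of_ne hge (Ne.symm hne)
      have hr0 : A < γ (r + 1) := by
        rcases h2 with h | h
        · omega
        · exact h
      have down : ∀ y : ℕ, r ≤ y → U (y + 1) < U y := by
        intro y hy
        have h3 := key y
        have h4 : γ (r + 1) ≤ γ (y + 1) := hmono (r + 1) (y + 1) (by omega) (by omega)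
        linarith
      have aux : ∀ q : ℕ, r < q → U q < U r := by
        intro q
        induction q with
        | zero => omega
        | succ n ih =>
          intro hq
          have hn : U (n + 1) < U n := down n (by omega)
          rcases Nat.lt_or_ge r n with h | h
          · exact lt_trans hn (ih h)
          · have : r = n := by omega
            subst this; exact hn
      exact aux r' hgt
end

section
/- Let n ≥ 1, let G be a finite set, let g : Fin n → G assign each agent a group, and for each pair (g₁,g₂) ∈ G × G let W^{g₁g₂} be an n × n real matrix with nonnegative entries whose row sums are at most 1. Let α : G × G → ℝ be nonnegative, φ : Fin n → ℝ, γ : G × ℕ → ℝ, R ≥ 1 an integer, and let F : ℝ → ℝ be differentiable with derivative f ≥ 0. Suppose there are constants M_g ≥ 0 with ∑_{t=1}^R f(v − γ(g,t)) ≤ M_g for every g ∈ G and every v ∈ ℝ, and a constant κ < 1 such that ∑_{g′∈G} α(g,g′)·M_g ≤ κ for every g ∈ G. Define L : ℝⁿ → ℝⁿ by L(u)_i = ∑_{t=1}^R F( ∑_{g′∈G} α(g_i, g′)·(W^{g_i g′} u)_i + φ_i − γ(g_i, t) ). Then L is Lipschitz with constant κ with respect to the supremum norm on ℝⁿ, and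 L has a unique fixed point u* ∈ ℝⁿ (i.e., there is exactly one u* with L(u*) = u*). -/
/-!
Along each coordinate, `L` is a sum of `R` shifted copies of `F` evaluated at a weighted
average of the neighbours' expectations. By the mean value theorem such a sum is
`M_g`-Lipschitz, and a substochastic row `W^{g g'}_{i ·}` moves by at most `‖u - v‖_∞`,
so coordinate `i` of `L u - L v` is at most `∑_{g'} α(g_i, g') M_{g_i} ‖u - v‖_∞ ≤ κ ‖u - v‖_∞`.
Hence `L` is a contraction of the complete space `(ℝⁿ, ‖·‖_∞)` and Banach's theorem applies.
-/

open Finset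
open scoped Matrix

theorem abs_mulVec_apply_le_norm {m n : Type*} [Fintype n] {W : Matrix m n ℝ} {i : m}
    (hW : ∀ j, 0 ≤ W i j) (hrow : ∑ j, W i j ≤ 1) (u : n → ℝ) :
    |(W *ᵥ u) i| ≤ ‖u‖ :=
  calc |(W *ᵥ u) i| ≤ ∑ j, |W i j * u j| := abs_sum_le_sum_abs _ _
    _ = ∑ j, W i j * ‖u j‖ := by simp only [abs_mul, abs_of_nonneg (hW _), Real.norm_eq_abs]
    _ ≤ ∑ j, W i j * ‖u‖ := by gcongr with j; exacts [hW j, norm_le_pi_norm u j]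
    _ = (∑ j, W i j) * ‖u‖ := (sum_mul _ _ _).symm
    _ ≤ ‖u‖ := mul_le_of_le_one_left (norm_nonneg u) hrow

theorem abs_sum_mul_sub_sum_mul_le {ι : Type*} {s : Finset ι} {α x y : ι → ℝ} {D : ℝ}
    (hα : ∀ k ∈ s, 0 ≤ α k) (hxy : ∀ k ∈ s, |x k - y k| ≤ D) :
    |∑ k ∈ s, α k * x k - ∑ k ∈ s, α k * y k| ≤ (∑ k ∈ s, α k) * D := by
  rw [← sum_sub_distrib, sum_mul]
  refine (abs_sum_le_sum_abs _ _).trans (sum_le_sum fun k hk => ?_)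
  rw [← mul_sub, abs_mul, abs_of_nonneg (hα k hk)]
  exact mul_le_mul_of_nonneg_left (hxy k hk) (hα k hk)

theorem abs_sum_comp_sub_sub_le {ι : Type*} {s : Finset ι} {F f : ℝ → ℝ} {γ : ι → ℝ} {M : ℝ}
    (hF : ∀ x, HasDerivAt F (f x) x) (hf : ∀ x, 0 ≤ f x)
    (hM : ∀ v, ∑ t ∈ s, f (v - γ t) ≤ M) (x y : ℝ) :
    |∑ t ∈ s, F (x - γ t) - ∑ t ∈ s, F (y - γ t)| ≤ M * |x - y| := by
  have hderiv (z : ℝ) :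
      HasDerivAt (fun z => ∑ t ∈ s, F (z - γ t)) (∑ t ∈ s, f (z - γ t)) z :=
    HasDerivAt.fun_sum fun t _ => by simpa using (hF (z - γ t)).comp_sub_const z (γ t)
  have hbound (z : ℝ) : ‖∑ t ∈ s, f (z - γ t)‖ ≤ M := by
    rw [Real.norm_of_nonneg (sum_nonneg fun t _ => hf _)]
    exact hM z
  exact convex_univ.norm_image_sub_le_of_norm_hasDerivWithin_le
    (fun z _ => (hderiv z).hasDerivWithinAt) (fun z _ => hbound z) (Set.mem_univ y)
    (Set.mem_univ x)

theorem norm_le_mul_norm_of_forall_abs_apply_le {ι : Type*} [Fintype ι] {x y : ι → ℝ}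
    {κ : ℝ} (h : ∀ i, |x i| ≤ κ * ‖y‖) : ‖x‖ ≤ κ * ‖y‖ := by
  rcases isEmpty_or_nonempty ι with hι | hι
  · simp [Subsingleton.elim x 0, Subsingleton.elim y 0]
  · exact (pi_norm_le_iff_of_nonempty x).2 h

theorem existsUnique_fixedPoint_of_norm_sub_le {E : Type*} [NormedAddCommGroup E]
    [CompleteSpace E] [Nonempty E] {L : E → E} {κ : ℝ} (hκ : κ < 1)
    (hL : ∀ u v, ‖L u - L v‖ ≤ κ * ‖u - v‖) : ∃! u, L u = u := by
  have hLip : LipschitzWith κ.toNNReal L := LipschitzWith.of_dist_le_mul fun u v => by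
    rw [dist_eq_norm, dist_eq_norm, Real.coe_toNNReal']
    exact (hL u v).trans (mul_le_mul_of_nonneg_right (le_max_left _ _) (norm_nonneg _))
  have hcontr : ContractingWith κ.toNNReal L := ⟨Real.toNNReal_lt_one.2 hκ, hLip⟩
  exact ⟨hcontr.fixedPoint L, hcontr.fixedPoint_isFixedPt,
    fun _ hu => hcontr.fixedPoint_unique hu⟩

theorem rational_expectations_unique_fixed_point_general
    (n : ℕ) {G : Type*} [Fintype G]
    (g : Fin n → G) (W : G → G → Matrix (Fin n) (Fin n) ℝ)
    (hWpos : ∀ g₁ g₂ : G, ∀ i j : Fin n, 0 ≤ W g₁ g₂ i j)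
    (hWrow : ∀ g₁ g₂ : G, ∀ i : Fin n, ∑ j, W g₁ g₂ i j ≤ 1)
    (α : G → G → ℝ) (hα : ∀ g₁ g₂ : G, 0 ≤ α g₁ g₂)
    (φ : Fin n → ℝ) (γ : G → ℕ → ℝ) (R : ℕ)
    (F f : ℝ → ℝ) (hF : ∀ x : ℝ, HasDerivAt F (f x) x) (hf0 : ∀ x, 0 ≤ f x)
    (M : G → ℝ)
    (hMbound : ∀ (g' : G) (v : ℝ), ∑ t ∈ Finset.Icc 1 R, f (v - γ g' t) ≤ M g')
    (κ : ℝ) (hκ : κ < 1)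
    (hκbound : ∀ g' : G, ∑ g'' : G, α g' g'' * M g' ≤ κ)
    (L : (Fin n → ℝ) → (Fin n → ℝ))
    (hL : ∀ (u : Fin n → ℝ) (i : Fin n),
      L u i = ∑ t ∈ Finset.Icc 1 R,
        F ((∑ g'' : G, α (g i) g'' * Matrix.mulVec (W (g i) g'') u i)
            + φ i - γ (g i) t)) :
    (∀ u v : Fin n → ℝ, ‖L u - L v‖ ≤ κ * ‖u - v‖) ∧
      ∃! uStar : Fin n → ℝ, L uStar = uStar := by
  have hM0 (g' : G) : 0 ≤ M g' := (sum_nonneg fun _ _ => hf0 _).trans (hMbound g' 0)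
  have hcoord (u v : Fin n → ℝ) (i : Fin n) : |L u i - L v i| ≤ κ * ‖u - v‖ := by
    have hrow (g'' : G) : |(W (g i) g'' *ᵥ u) i - (W (g i) g'' *ᵥ v) i| ≤ ‖u - v‖ := by
      simpa only [Matrix.mulVec_sub, Pi.sub_apply] using
        abs_mulVec_apply_le_norm (hWpos _ _ i) (hWrow _ _ i) (u - v)
    rw [hL, hL]
    calc _ ≤ M (g i) * |(∑ g'', α (g i) g'' * (W (g i) g'' *ᵥ u) i) + φ i
              - ((∑ g'', α (g i) g'' * (W (g i) g'' *ᵥ v) i) + φ i)| :=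
          abs_sum_comp_sub_sub_le hF hf0 (hMbound (g i)) _ _
      _ ≤ M (g i) * ((∑ g'', α (g i) g'') * ‖u - v‖) := by
          rw [add_sub_add_right_eq_sub]
          exact mul_le_mul_of_nonneg_left
            (abs_sum_mul_sub_sum_mul_le (fun _ _ => hα _ _) fun g'' _ => hrow g'') (hM0 _)
      _ = (∑ g'', α (g i) g'' * M (g i)) * ‖u - v‖ := by rw [← sum_mul]; ring
      _ ≤ κ * ‖u - v‖ := mul_le_mul_of_nonneg_right (hκbound _) (norm_nonneg _)
  have hLip (u v : Fin n → ℝ) : ‖L u - L v‖ ≤ κ * ‖u - v‖ :=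
    norm_le_mul_norm_of_forall_abs_apply_le (hcoord u v)
  exact ⟨hLip, existsUnique_fixedPoint_of_norm_sub_le hκ hLip⟩

/-- Contraction-mapping result for the rational-expectations operator `L`: under
row-normalized nonnegative network matrices, nonnegative peer effects, and the bound
`∑_{g'} α(g,g')·M_g ≤ κ < 1`, the map `L` is `κ`-Lipschitz in the supremum norm and
has a unique fixed point. -/
theorem rational_expectations_unique_fixed_point
    (n : ℕ) (hn : 1 ≤ n) {G : Type*} [Fintype G]
    (g : Fin n → G) (W : G → G → Matrix (Fin n) (Fin n) ℝ)
    (hWpos : ∀ g₁ g₂ : G, ∀ i j : Fin n, 0 ≤ W g₁ g₂ i j)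
    (hWrow : ∀ g₁ g₂ : G, ∀ i : Fin n, ∑ j, W g₁ g₂ i j ≤ 1)
    (α : G → G → ℝ) (hα : ∀ g₁ g₂ : G, 0 ≤ α g₁ g₂)
    (φ : Fin n → ℝ) (γ : G → ℕ → ℝ) (R : ℕ) (hR : 1 ≤ R)
    (F f : ℝ → ℝ) (hF : ∀ x : ℝ, HasDerivAt F (f x) x) (hf0 : ∀ x, 0 ≤ f x)
    (M : G → ℝ) (hM0 : ∀ g' : G, 0 ≤ M g')
    (hMbound : ∀ (g' : G) (v : ℝ), ∑ t ∈ Finset.Icc 1 R, f (v - γ g' t) ≤ M g')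
    (κ : ℝ) (hκ : κ < 1)
    (hκbound : ∀ g' : G, ∑ g'' : G, α g' g'' * M g' ≤ κ)
    (L : (Fin n → ℝ) → (Fin n → ℝ))
    (hL : ∀ (u : Fin n → ℝ) (i : Fin n),
      L u i = ∑ t ∈ Finset.Icc 1 R,
        F ((∑ g'' : G, α (g i) g'' * Matrix.mulVec (W (g i) g'') u i)
            + φ i - γ (g i) t)) :
    (∀ u v : Fin n → ℝ, ‖L u - L v‖ ≤ κ * ‖u - v‖) ∧
      ∃! uStar : Fin n → ℝ, L uStar = uStar :=
  rational_expectations_unique_fixed_point_general n g W hWpos hWrow α hα φ γ R F f hF hf0 M hMbound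
    κ hκ hκbound L hL
end
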